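/- Let (X,≤) be an ordered set, {A,B} a nontrivial partition of Fin n, ∗ a binary operation on Fin n with ∗(A×A) ⊆ A, ∗(A×B) ⊆ B, ∗(B×A) ⊆ B, ∗(B×B) ⊆ A, and F : X^n → X, g : X → X. Suppose F has the ι-mixed g-monotone property: F is g-increasing in each argument with index in A and g-decreasing in each argument with index in B. Then the induced map F∗ : X^n → X^n, (F∗ U) i = F(fun k => U(∗ i k)), is G-increasing with respect to the mixed order ⊑ on X^n, i.e., G(U) ⊑ G(V) implies F∗(U) ⊑ F∗(V), where G is the coordinatewise extension of g. -/
import Mathlib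

theorem aux_mixed_mono {X : Type*} [PartialOrder X] {n : ℕ}
    (A B : Set (Fin n)) (hunion : A ∪ B = Set.univ)
    (F : (Fin n → X) → X) (g : X → X)
    (hmonoA : ∀ i ∈ A, ∀ (W : Fin n → X) (x y : X),
        g x ≤ g y → F (Function.update W i x) ≤ F (Function.update W i y))
    (hmonoB : ∀ i ∈ B, ∀ (W : Fin n → X) (x y : X),
        g x ≤ g y → F (Function.update W i y) ≤ F (Function.update W i x))
    (W W' : Fin n → X)
    (h1 : ∀ k ∈ A, g (W k) ≤ g (W' k))
    (h2 : ∀ k ∈ B, g (W' k) ≤ g (W k)) :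
    F W ≤ F W' := by
  have key : ∀ s : Finset (Fin n),
      F W ≤ F (fun k => if k ∈ s then W' k else W k) := by
    intro s
    induction s using Finset.induction with
    | empty => simp
    | @insert j s hj ih =>
      refine le_trans ih ?_
      set Z : Fin n → X := fun k => if k ∈ s then W' k else W k with hZ
      have hZj : Z j = W j := by simp [hZ, hj]
      have heq : (fun k => if k ∈ insert j s then W' k else W k)
          = Function.update Z j (W' j) := by
        funext k
        by_cases hk : k = j
        · subst hk; simp
        · simp [Function.update, hk, hZ]
      have heq0 : Z = Function.update Z j (W j) := by
        funext k
        by_cases hk : k = j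
        · subst hk; simp [hZj]
        · simp [Function.update, hk]
      rw [heq, show F Z = F (Function.update Z j (W j)) from by rw [← heq0]]
      have hjAB : j ∈ A ∪ B := hunion ▸ Set.mem_univ j
      rcases hjAB with hjA | hjB
      · exact hmonoA j hjA Z (W j) (W' j) (h1 j hjA)
      · exact hmonoB j hjB Z (W' j) (W j) (h2 j hjB)
  have := key Finset.univ
  simpa using this


/-- Lemma 5: if `op ∈ 𝒰` and `F` has the `ι`-mixed `g`-monotone property
(`g`-increasing in arguments with index in `A`, `g`-decreasing in arguments
with index in `B`), then the induced map `F∗` is `G`-increasing with respect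
to the mixed order `⊑` on `Fin n → X`. -/
theorem induced_star_map_G_increasing
    {X : Type*} [PartialOrder X] {n : ℕ}
    (A B : Set (Fin n)) (hA : A.Nonempty) (hB : B.Nonempty)
    (hdisj : Disjoint A B) (hunion : A ∪ B = Set.univ)
    (op : Fin n → Fin n → Fin n)
    (hAA : ∀ i ∈ A, ∀ k ∈ A, op i k ∈ A)
    (hAB : ∀ i ∈ A, ∀ k ∈ B, op i k ∈ B)
    (hBA : ∀ i ∈ B, ∀ k ∈ A, op i k ∈ B)
    (hBB : ∀ i ∈ B, ∀ k ∈ B, op i k ∈ A)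
    (F : (Fin n → X) → X) (g : X → X)
    (hmonoA : ∀ i ∈ A, ∀ (W : Fin n → X) (x y : X),
        g x ≤ g y → F (Function.update W i x) ≤ F (Function.update W i y))
    (hmonoB : ∀ i ∈ B, ∀ (W : Fin n → X) (x y : X),
        g x ≤ g y → F (Function.update W i y) ≤ F (Function.update W i x))
    (U V : Fin n → X)
    (hGUV : (∀ i ∈ A, g (U i) ≤ g (V i)) ∧ (∀ i ∈ B, g (V i) ≤ g (U i))) :
    (∀ i ∈ A, F (fun k => U (op i k)) ≤ F (fun k => V (op i k))) ∧
    (∀ i ∈ B, F (fun k => V (op i k)) ≤ F (fun k => U (op i k))) := by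
  obtain ⟨hG1, hG2⟩ := hGUV
  constructor
  · intro i hi
    exact aux_mixed_mono A B hunion F g hmonoA hmonoB _ _
      (fun k hk => hG1 _ (hAA i hi k hk))
      (fun k hk => hG2 _ (hAB i hi k hk))
  · intro i hi
    exact aux_mixed_mono A B hunion F g hmonoA hmonoB _ _
      (fun k hk => hG2 _ (hBA i hi k hk))
      (fun k hk => hG1 _ (hBB i hi k hk))
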